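/- Let N ≥ 1. The antilinear map J̃_N on M_(N+1)(ℂ) ⊗ ℂ² defined by J̃_N(a ⊗ v) := a* ⊗ σ₂ v̄ satisfies: (i) J̃_N is antiunitary, i.e. ⟨J̃_N x, J̃_N y⟩ = conj(⟨x, y⟩) for all x, y; (ii) J̃_N² = −1; (iii) J̃_N D̃_N = D̃_N J̃_N; and (iv) for all a, b ∈ M_(N+1)(ℂ), writing L_a for the operator b' ⊗ v ↦ ab' ⊗ v, one has [L_a, J̃_N L_b J̃_N⁻¹] = 0 and [[D̃_N, L_a], J̃_N L_b J̃_N⁻¹] = 0. -/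

import Mathlib

noncomputable section
open Matrix Kronecker

/-- The diagonal matrix `H` with `H|m⟩ = m|m⟩`, `m = i - N/2` for index `i : Fin (N+1)`. -/
def Hmat (N : ℕ) : Matrix (Fin (N + 1)) (Fin (N + 1)) ℂ :=
  Matrix.diagonal fun i => (i : ℂ) - (N : ℂ) / 2

/-- The raising operator `E` with `E|m⟩ = √((j-m)(j+m+1)) |m+1⟩`, `j = N/2`. -/
def Emat (N : ℕ) : Matrix (Fin (N + 1)) (Fin (N + 1)) ℂ := fun p q =>
  if (p : ℕ) = (q : ℕ) + 1 then (Real.sqrt ((N - (q : ℕ)) * ((q : ℕ) + 1)) : ℂ) else 0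

def Fmat (N : ℕ) : Matrix (Fin (N + 1)) (Fin (N + 1)) ℂ := (Emat N)ᴴ

/-- `J₁ = (E+F)/2`, `J₂ = (E−F)/(2i)`, `J₃ = H`. -/
def Jmat (N : ℕ) : Fin 3 → Matrix (Fin (N + 1)) (Fin (N + 1)) ℂ :=
  ![(1 / 2 : ℂ) • (Emat N + Fmat N),
    (1 / (2 * Complex.I) : ℂ) • (Emat N - Fmat N),
    Hmat N]

/-- The three Pauli matrices. -/
def pauli : Fin 3 → Matrix (Fin 2) (Fin 2) ℂ :=
  ![!![0, 1; 1, 0], !![0, -Complex.I; Complex.I, 0], !![1, 0; 0, -1]]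

/-- The matrix of the commutator map `a ↦ [X, a] = Xa − aX` on `M_(N+1)(ℂ)`,
where a matrix `a` is regarded as the vector of its entries `(p, q) ↦ a p q`. -/
def adMat {n : Type*} [Fintype n] [DecidableEq n] (X : Matrix n n ℂ) :
    Matrix (n × n) (n × n) ℂ := fun r c =>
  X r.1 c.1 * (if r.2 = c.2 then 1 else 0) - (if r.1 = c.1 then 1 else 0) * X c.2 r.2

/-- The index set of the Hilbert space `M_(N+1)(ℂ) ⊗ ℂ²`: an element `x` has component
`x ((p,q), s) = a p q * v s` on a pure tensor `a ⊗ v`. -/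
abbrev FuzzyIdx (N : ℕ) := (Fin (N + 1) × Fin (N + 1)) × Fin 2

/-- The full Dirac operator `D̃_N (a ⊗ v) = a ⊗ v + Σ_k [J_k, a] ⊗ σ_k v` as a matrix. -/
def fullDirac (N : ℕ) : Matrix (FuzzyIdx N) (FuzzyIdx N) ℂ :=
  1 + ∑ k : Fin 3, (adMat (Jmat N k)) ⊗ₖ (pauli k)

/-- The inner product `⟨a ⊗ v, b ⊗ w⟩ = Tr(a*b)·⟨v,w⟩` on `M_(N+1)(ℂ) ⊗ ℂ²`
(conjugate-linear in the first variable), written in components. -/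
def fuzzyInner (N : ℕ) (x y : FuzzyIdx N → ℂ) : ℂ :=
  ∑ r : FuzzyIdx N, star (x r) * y r

/-- The antilinear map `J̃_N (a ⊗ v) = a* ⊗ σ₂ v̄`, written in components. -/
def JtN (N : ℕ) (x : FuzzyIdx N → ℂ) : FuzzyIdx N → ℂ := fun r =>
  if r.2 = 0 then -Complex.I * star (x ((r.1.2, r.1.1), 1))
  else Complex.I * star (x ((r.1.2, r.1.1), 0))

/-- The inverse of `J̃_N` (equal to `−J̃_N` since `J̃_N² = −1`). -/
def JtNInv (N : ℕ) (x : FuzzyIdx N → ℂ) : FuzzyIdx N → ℂ := fun r =>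
  if r.2 = 0 then Complex.I * star (x ((r.1.2, r.1.1), 1))
  else -Complex.I * star (x ((r.1.2, r.1.1), 0))

/-- The left-multiplication operator `L_a : b ⊗ v ↦ ab ⊗ v` as a matrix. -/
def leftMulOp (N : ℕ) (a : Matrix (Fin (N + 1)) (Fin (N + 1)) ℂ) :
    Matrix (FuzzyIdx N) (FuzzyIdx N) ℂ := fun r c =>
  if r.1.2 = c.1.2 ∧ r.2 = c.2 then a r.1.1 c.1.1 else 0

/-!
`J̃_N` acts on components as `x ↦ jPhase · conj (x ∘ fuzzySwap)`, so (i) and (ii) are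
reindexings. For hermitian `J_k` one has `[J_k, a]* = -[J_k, a*]`, and `σ₂ σ̄_k σ₂ = -σ_k`;
these two signs cancel, so every term of `D̃_N` commutes with `J̃_N`. Finally
`J̃_N L_b J̃_N⁻¹` is right multiplication by `b*`, which commutes with every left
multiplication, hence with `L_a` and with `[D̃_N, L_a] = Σ_k L_{[J_k, a]} ⊗ σ_k`.
-/

theorem Matrix.sub_kronecker {α l m n p : Type*} [Ring α] (A₁ A₂ : Matrix l m α)
    (B : Matrix n p α) : (A₁ - A₂) ⊗ₖ B = A₁ ⊗ₖ B - A₂ ⊗ₖ B := by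
  ext ⟨i, i'⟩ ⟨j, j'⟩
  simp [sub_mul]

theorem Matrix.mulVec_mulVec_of_commute {n α : Type*} [Fintype n] [CommSemiring α]
    {A B : Matrix n n α} (h : Commute A B) (x : n → α) : A *ᵥ (B *ᵥ x) = B *ᵥ (A *ᵥ x) := by
  rw [mulVec_mulVec, h.eq, ← mulVec_mulVec]

theorem Matrix.commute_kronecker_one_kronecker {α n m : Type*} [CommRing α] [Fintype n]
    [DecidableEq n] [Fintype m] [DecidableEq m] (A B : Matrix n n α) (S : Matrix m m α) :
    Commute ((A ⊗ₖ 1) ⊗ₖ S) ((1 ⊗ₖ B) ⊗ₖ (1 : Matrix m m α)) := by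
  simp only [Commute, SemiconjBy, ← mul_kronecker_mul, one_mul, mul_one]

section Commutator

variable {n : Type*} [Fintype n] [DecidableEq n]

theorem adMat_eq_kronecker (X : Matrix n n ℂ) : adMat X = X ⊗ₖ 1 - 1 ⊗ₖ Xᵀ := by
  ext ⟨p, q⟩ ⟨c, d⟩
  simp [adMat, one_apply]

theorem star_adMat_swap {X : Matrix n n ℂ} (hX : X.IsHermitian) (r c : n × n) :
    star (adMat X r.swap c.swap) = -adMat X r c := by
  simp only [adMat, Prod.fst_swap, Prod.snd_swap, star_sub, star_mul', hX.apply,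
    apply_ite star, star_one, star_zero]
  ring

theorem adMat_mul_kronecker_one_sub (X a : Matrix n n ℂ) :
    adMat X * (a ⊗ₖ 1) - (a ⊗ₖ 1) * adMat X = (X * a - a * X) ⊗ₖ 1 := by
  simp only [adMat_eq_kronecker, sub_mul, mul_sub, ← mul_kronecker_mul, one_mul, mul_one,
    sub_kronecker]
  abel

end Commutator

theorem Jmat_isHermitian (N : ℕ) (k : Fin 3) : (Jmat N k).IsHermitian := by
  fin_cases k
  · exact (isHermitian_add_transpose_self (Emat N)).smul (by simp [IsSelfAdjoint])
  · show ((1 / (2 * Complex.I) : ℂ) • (Emat N - (Emat N)ᴴ))ᴴ = _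
    have : star (1 / (2 * Complex.I) : ℂ) = -(1 / (2 * Complex.I)) := by
      simp [Complex.conj_I]
    rw [conjTranspose_smul, conjTranspose_sub, conjTranspose_conjTranspose, this, neg_smul,
      ← smul_neg, neg_sub]
    rfl
  · exact isHermitian_diagonal_of_self_adjoint _ (by ext i; simp)

-- `σ₂` is off-diagonal: `(σ₂ v̄) s = jPhase s * conj (v s.rev)`.
def jPhase : Fin 2 → ℂ := ![-Complex.I, Complex.I]

def fuzzySwap {N : ℕ} (r : FuzzyIdx N) : FuzzyIdx N := (r.1.swap, r.2.rev)

section RealStructure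

variable {N : ℕ}

theorem fuzzySwap_involutive : Function.Involutive (fuzzySwap (N := N)) := by
  intro r
  simp [fuzzySwap]

@[simp]
theorem fuzzySwap_snd (r : FuzzyIdx N) : (fuzzySwap r).2 = r.2.rev := rfl

theorem star_jPhase_mul_self (s : Fin 2) : star (jPhase s) * jPhase s = 1 := by
  fin_cases s <;> simp [jPhase]

theorem jPhase_mul_star_rev (s : Fin 2) : jPhase s * star (jPhase s.rev) = -1 := by
  fin_cases s <;> simp [jPhase]

theorem jPhase_mul_star_pauli_rev (k : Fin 3) (s t : Fin 2) :
    jPhase s * star (pauli k s.rev t.rev) = -(pauli k s t * jPhase t) := by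
  fin_cases k <;> fin_cases s <;> fin_cases t <;> simp [pauli, jPhase]

theorem JtN_apply (x : FuzzyIdx N → ℂ) (r : FuzzyIdx N) :
    JtN N x r = jPhase r.2 * star (x (fuzzySwap r)) := by
  obtain ⟨⟨p, q⟩, s⟩ := r
  fin_cases s <;> simp [JtN, jPhase, fuzzySwap]

theorem JtNInv_eq_neg (x : FuzzyIdx N → ℂ) : JtNInv N x = -JtN N x := by
  funext ⟨⟨p, q⟩, s⟩
  fin_cases s <;> simp [JtN, JtNInv]

theorem JtN_neg (x : FuzzyIdx N → ℂ) : JtN N (-x) = -JtN N x := by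
  funext r
  simp [JtN_apply]

theorem JtN_JtN (x : FuzzyIdx N → ℂ) : JtN N (JtN N x) = -x := by
  funext r
  simp only [JtN_apply, star_mul', star_star, fuzzySwap_involutive r, fuzzySwap_snd, Pi.neg_apply]
  linear_combination (jPhase_mul_star_rev r.2) * x r

theorem JtN_JtNInv (x : FuzzyIdx N → ℂ) : JtN N (JtNInv N x) = x := by
  rw [JtNInv_eq_neg, JtN_neg, JtN_JtN, neg_neg]

theorem JtNInv_JtN (x : FuzzyIdx N → ℂ) : JtNInv N (JtN N x) = x := by
  rw [JtNInv_eq_neg, JtN_JtN, neg_neg]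

theorem fuzzyInner_JtN (x y : FuzzyIdx N → ℂ) :
    fuzzyInner N (JtN N x) (JtN N y) = star (fuzzyInner N x y) := by
  rw [fuzzyInner, fuzzyInner, star_sum, ← Equiv.sum_comp (fuzzySwap_involutive.toPerm _)]
  refine Finset.sum_congr rfl fun r _ => ?_
  simp only [Function.Involutive.coe_toPerm, JtN_apply, fuzzySwap_involutive r, star_mul',
    star_star]
  linear_combination (x r * star (y r)) * star_jPhase_mul_self (fuzzySwap r).2

end RealStructure

-- The entrywise form of `J̃_N M = M J̃_N`.
def jtNCommutant (N : ℕ) : AddSubmonoid (Matrix (FuzzyIdx N) (FuzzyIdx N) ℂ) where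
  carrier := {M | ∀ r c, jPhase r.2 * star (M (fuzzySwap r) (fuzzySwap c)) = M r c * jPhase c.2}
  zero_mem' := by simp
  add_mem' {M M'} hM hM' r c := by
    simp only [Matrix.add_apply, star_add]
    linear_combination hM r c + hM' r c

section Commutant

variable {N : ℕ}

theorem one_mem_jtNCommutant : (1 : Matrix (FuzzyIdx N) (FuzzyIdx N) ℂ) ∈ jtNCommutant N := by
  intro r c
  by_cases h : r = c
  · subst h
    simp
  · simp [one_apply_ne h, one_apply_ne (fuzzySwap_involutive.injective.ne h)]

theorem adMat_kronecker_pauli_mem_jtNCommutant {X : Matrix (Fin (N + 1)) (Fin (N + 1)) ℂ}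
    (hX : X.IsHermitian) (k : Fin 3) : adMat X ⊗ₖ pauli k ∈ jtNCommutant N := by
  intro r c
  simp only [kroneckerMap_apply, fuzzySwap, star_mul', star_adMat_swap hX]
  linear_combination (-adMat X r.1 c.1) * jPhase_mul_star_pauli_rev k r.2 c.2

theorem fullDirac_mem_jtNCommutant : fullDirac N ∈ jtNCommutant N :=
  add_mem one_mem_jtNCommutant <| sum_mem fun k _ =>
    adMat_kronecker_pauli_mem_jtNCommutant (Jmat_isHermitian N k) k

theorem JtN_mulVec_of_mem_jtNCommutant {M : Matrix (FuzzyIdx N) (FuzzyIdx N) ℂ}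
    (hM : M ∈ jtNCommutant N) (x : FuzzyIdx N → ℂ) : JtN N (M *ᵥ x) = M *ᵥ JtN N x := by
  funext r
  rw [JtN_apply, mulVec, mulVec, dotProduct, dotProduct, star_sum, Finset.mul_sum,
    ← Equiv.sum_comp (fuzzySwap_involutive.toPerm _)]
  refine Finset.sum_congr rfl fun c _ => ?_
  simp only [Function.Involutive.coe_toPerm, JtN_apply, star_mul']
  linear_combination star (x (fuzzySwap c)) * hM r c

end Commutant

-- Right multiplication `b' ⊗ v ↦ b' b ⊗ v`.
def rightMulOp (N : ℕ) (b : Matrix (Fin (N + 1)) (Fin (N + 1)) ℂ) :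
    Matrix (FuzzyIdx N) (FuzzyIdx N) ℂ :=
  (1 ⊗ₖ bᵀ) ⊗ₖ 1

section LeftRight

variable {N : ℕ}

theorem leftMulOp_eq_kronecker (a : Matrix (Fin (N + 1)) (Fin (N + 1)) ℂ) :
    leftMulOp N a = (a ⊗ₖ 1) ⊗ₖ 1 := by
  ext ⟨⟨p, q⟩, s⟩ ⟨⟨c, d⟩, t⟩
  simp only [leftMulOp, kroneckerMap_apply, one_apply, ite_and]
  split_ifs <;> simp

theorem leftMulOp_mulVec_apply (a : Matrix (Fin (N + 1)) (Fin (N + 1)) ℂ)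
    (y : FuzzyIdx N → ℂ) (r : FuzzyIdx N) :
    (leftMulOp N a *ᵥ y) r = ∑ c, a r.1.1 c * y ((c, r.1.2), r.2) := by
  simp [mulVec, dotProduct, leftMulOp, Fintype.sum_prod_type, ite_and]

theorem rightMulOp_mulVec_apply (b : Matrix (Fin (N + 1)) (Fin (N + 1)) ℂ)
    (y : FuzzyIdx N → ℂ) (r : FuzzyIdx N) :
    (rightMulOp N b *ᵥ y) r = ∑ c, y ((r.1.1, c), r.2) * b c r.1.2 := by
  simp [mulVec, dotProduct, rightMulOp, Fintype.sum_prod_type, one_apply, mul_comm]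

theorem JtN_leftMulOp_JtNInv (b : Matrix (Fin (N + 1)) (Fin (N + 1)) ℂ)
    (x : FuzzyIdx N → ℂ) : JtN N (leftMulOp N b *ᵥ JtNInv N x) = rightMulOp N bᴴ *ᵥ x := by
  funext r
  rw [JtN_apply, leftMulOp_mulVec_apply, rightMulOp_mulVec_apply, star_sum, Finset.mul_sum]
  refine Finset.sum_congr rfl fun c _ => ?_
  simp only [JtNInv_eq_neg, Pi.neg_apply, JtN_apply, fuzzySwap, Prod.fst_swap, Prod.snd_swap,
    Prod.swap_prod_mk, Fin.rev_rev, conjTranspose_apply, star_neg, star_mul', star_star]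
  linear_combination (-(x ((r.1.1, c), r.2) * star (b r.1.2 c))) * jPhase_mul_star_rev r.2

theorem fullDirac_mul_leftMulOp_sub (a : Matrix (Fin (N + 1)) (Fin (N + 1)) ℂ) :
    fullDirac N * leftMulOp N a - leftMulOp N a * fullDirac N =
      ∑ k, ((Jmat N k * a - a * Jmat N k) ⊗ₖ 1) ⊗ₖ pauli k := by
  rw [fullDirac, leftMulOp_eq_kronecker, add_mul, mul_add, one_mul, mul_one,
    Finset.sum_mul, Finset.mul_sum, add_sub_add_left_eq_sub, ← Finset.sum_sub_distrib]
  refine Finset.sum_congr rfl fun k _ => ?_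
  rw [← mul_kronecker_mul, ← mul_kronecker_mul, one_mul, mul_one, ← sub_kronecker,
    adMat_mul_kronecker_one_sub]

end LeftRight

theorem fullDirac_real_structure_general (N : ℕ) :
    -- `JtNInv` is indeed the inverse map of `J̃_N`
    (∀ x, JtN N (JtNInv N x) = x) ∧ (∀ x, JtNInv N (JtN N x) = x) ∧
    -- (i) `J̃_N` is antiunitary
    (∀ x y, fuzzyInner N (JtN N x) (JtN N y) = star (fuzzyInner N x y)) ∧
    -- (ii) `J̃_N² = −1`
    (∀ x, JtN N (JtN N x) = -x) ∧
    -- (iii) `J̃_N D̃_N = D̃_N J̃_N`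
    (∀ x, JtN N ((fullDirac N).mulVec x) = (fullDirac N).mulVec (JtN N x)) ∧
    -- (iv) `[L_a, J̃_N L_b J̃_N⁻¹] = 0` and `[[D̃_N, L_a], J̃_N L_b J̃_N⁻¹] = 0`
    (∀ a b : Matrix (Fin (N + 1)) (Fin (N + 1)) ℂ, ∀ x,
      (leftMulOp N a).mulVec (JtN N ((leftMulOp N b).mulVec (JtNInv N x))) =
        JtN N ((leftMulOp N b).mulVec (JtNInv N ((leftMulOp N a).mulVec x)))) ∧
    (∀ a b : Matrix (Fin (N + 1)) (Fin (N + 1)) ℂ, ∀ x,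
      (fullDirac N * leftMulOp N a - leftMulOp N a * fullDirac N).mulVec
          (JtN N ((leftMulOp N b).mulVec (JtNInv N x))) =
        JtN N ((leftMulOp N b).mulVec
          (JtNInv N ((fullDirac N * leftMulOp N a - leftMulOp N a * fullDirac N).mulVec x)))) := by
  refine ⟨JtN_JtNInv, JtNInv_JtN, fuzzyInner_JtN, JtN_JtN,
    JtN_mulVec_of_mem_jtNCommutant fullDirac_mem_jtNCommutant, fun a b x => ?_, fun a b x => ?_⟩
  · rw [JtN_leftMulOp_JtNInv, JtN_leftMulOp_JtNInv, leftMulOp_eq_kronecker]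
    exact mulVec_mulVec_of_commute (commute_kronecker_one_kronecker _ _ _) x
  · rw [JtN_leftMulOp_JtNInv, JtN_leftMulOp_JtNInv, fullDirac_mul_leftMulOp_sub]
    exact mulVec_mulVec_of_commute
      (Commute.sum_left _ _ _ fun k _ => commute_kronecker_one_kronecker _ _ _) x

theorem fullDirac_real_structure (N : ℕ) (hN : 1 ≤ N) :
    -- `JtNInv` is indeed the inverse map of `J̃_N`
    (∀ x, JtN N (JtNInv N x) = x) ∧ (∀ x, JtNInv N (JtN N x) = x) ∧
    -- (i) `J̃_N` is antiunitary
    (∀ x y, fuzzyInner N (JtN N x) (JtN N y) = star (fuzzyInner N x y)) ∧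
    -- (ii) `J̃_N² = −1`
    (∀ x, JtN N (JtN N x) = -x) ∧
    -- (iii) `J̃_N D̃_N = D̃_N J̃_N`
    (∀ x, JtN N ((fullDirac N).mulVec x) = (fullDirac N).mulVec (JtN N x)) ∧
    -- (iv) `[L_a, J̃_N L_b J̃_N⁻¹] = 0` and `[[D̃_N, L_a], J̃_N L_b J̃_N⁻¹] = 0`
    (∀ a b : Matrix (Fin (N + 1)) (Fin (N + 1)) ℂ, ∀ x,
      (leftMulOp N a).mulVec (JtN N ((leftMulOp N b).mulVec (JtNInv N x))) =
        JtN N ((leftMulOp N b).mulVec (JtNInv N ((leftMulOp N a).mulVec x)))) ∧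
    (∀ a b : Matrix (Fin (N + 1)) (Fin (N + 1)) ℂ, ∀ x,
      (fullDirac N * leftMulOp N a - leftMulOp N a * fullDirac N).mulVec
          (JtN N ((leftMulOp N b).mulVec (JtNInv N x))) =
        JtN N ((leftMulOp N b).mulVec
          (JtNInv N ((fullDirac N * leftMulOp N a - leftMulOp N a * fullDirac N).mulVec x)))) :=
  fullDirac_real_structure_general N
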